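/- Let μ be the measure on ℝ² defined by μ(A) = ∫_{A ∩ {x : x₂ = 0}} |x₁|^{−1} dH¹(x), i.e. μ has density 1/|x₁| with respect to the 1-dimensional Hausdorff measure restricted to the line {x₂ = 0}. Then (with n = 1, m = 2) the integral Menger curvature satisfies M_{K₁²}(μ) = 0, while μ(B(0,δ)) = ∞ for every δ > 0. -/

import Mathlib

open MeasureTheory Metric ENNReal NNReal Filter

noncomputable section

/-- `ℝ^m` as a Euclidean space. -/
abbrev Euc (m : ℕ) : Type := EuclideanSpace ℝ (Fin m)

/-- The support of a measure: points all of whose neighborhoods have positive measure. -/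
def msupport {m : ℕ} (μ : Measure (Euc m)) : Set (Euc m) :=
  {x | ∀ r > (0:ℝ), 0 < μ (ball x r)}

/-- Upper `n`-density `Θ^{n,*}(μ,x)`. -/
def upperDensity {m : ℕ} (n : ℕ) (μ : Measure (Euc m)) (x : Euc m) : ℝ≥0∞ :=
  Filter.limsup (fun r : ℝ => μ (closedBall x r) / ENNReal.ofReal (r ^ n))
    (nhdsWithin 0 (Set.Ioi 0))

/-- Lower `n`-density `Θ^n_*(μ,x)`. -/
def lowerDensity {m : ℕ} (n : ℕ) (μ : Measure (Euc m)) (x : Euc m) : ℝ≥0∞ :=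
  Filter.liminf (fun r : ℝ => μ (closedBall x r) / ENNReal.ofReal (r ^ n))
    (nhdsWithin 0 (Set.Ioi 0))

/-- `h_min` of a tuple of points: the least distance from a point to the affine span of
the remaining ones. -/
def hmin {m k : ℕ} (X : Fin k → Euc m) : ℝ :=
  ⨅ i : Fin k, Metric.infDist (X i) (affineSpan ℝ (X '' ({i}ᶜ : Set (Fin k))) : Set (Euc m))

/-- The Lerman–Whitehouse integrand `K₁`. -/
def K1 {m : ℕ} (n : ℕ) (X : Fin (n+2) → Euc m) : ℝ :=
  if 0 < μH[(n+1 : ℝ)] (convexHull ℝ (Set.range X)) then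
    (μH[(n+1 : ℝ)] (convexHull ℝ (Set.range X))).toReal /
      Metric.diam (Set.range X) ^ ((((n:ℝ)+1) * ((n:ℝ)+2)) / 2)
  else 0

/-- The Lerman–Whitehouse integrand `K₂`. -/
def K2 {m : ℕ} (n : ℕ) (X : Fin (n+2) → Euc m) : ℝ :=
  if 0 < μH[(n+1 : ℝ)] (convexHull ℝ (Set.range X)) then
    hmin X / Metric.diam (Set.range X) ^ (((n:ℝ) * ((n:ℝ)+1) + 2) / 2)
  else 0

/-- Integral Menger curvature `M_{K^p}(μ)`. -/
def mengerCurv {m : ℕ} (n : ℕ) (p : ℝ) (K : (Fin (n+2) → Euc m) → ℝ)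
    (μ : Measure (Euc m)) : ℝ≥0∞ :=
  ∫⁻ X, ENNReal.ofReal (K X ^ p) ∂(Measure.pi fun _ : Fin (n+2) => μ)

/-- Pointwise Menger curvature `curv^n_{K^p;μ}(x,r)`. -/
def ptMengerCurv {m : ℕ} (n : ℕ) (p : ℝ) (K : (Fin (n+2) → Euc m) → ℝ)
    (μ : Measure (Euc m)) (x : Euc m) (r : ℝ) : ℝ≥0∞ :=
  ∫⁻ Y, ENNReal.ofReal (K (Fin.cons x Y) ^ p)
    ∂(Measure.pi fun _ : Fin (n+1) => μ.restrict (closedBall x r))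

/-- A `(μ,p)`-proper integrand with constants `c` and `ℓ` in condition (2). -/
structure IsProperIntegrand {m : ℕ} (n : ℕ) (μ : Measure (Euc m)) (p : ℝ)
    (K : (Fin (n+2) → Euc m) → ℝ) (c ℓ : ℝ) : Prop where
  nonneg : ∀ X, 0 ≤ K X
  one_le_c : 1 ≤ c
  one_le_ell : 1 ≤ ℓ
  aemeasurable : AEMeasurable K (Measure.pi fun _ : Fin (n+2) => μ)
  simplex_bound : ∀ t > (0:ℝ), ∀ C ≥ (1:ℝ), ∀ x : Euc m, ∀ X : Fin (n+1) → Euc m,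
    (∀ i, X i ∈ closedBall x (C * t)) → t / C ≤ hmin X →
    ∀ w ∈ closedBall x (C * t),
      (Metric.infDist w (affineSpan ℝ (Set.range X) : Set (Euc m)) / t) ^ p ≤
        c * C ^ ℓ * t ^ (n * (n+1)) * K (Fin.snoc X w) ^ p
  homog : ∀ lam > (0:ℝ), ∀ X : Fin (n+2) → Euc m,
    lam ^ (n * (n+1)) * K (fun i => lam • X i) ^ p = K X ^ p
  transl : ∀ b : Euc m, ∀ X : Fin (n+2) → Euc m, K (fun i => X i + b) = K X

/-- The set of `n`-dimensional affine subspaces of `ℝ^m`. -/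
def nPlanes (m n : ℕ) : Set (AffineSubspace ℝ (Euc m)) :=
  {L | (L : Set (Euc m)).Nonempty ∧ Module.finrank ℝ L.direction = n}

/-- Jones' beta number `β^n_{μ;p}(x,r)`. -/
def beta {m : ℕ} (n : ℕ) (p : ℝ) (μ : Measure (Euc m)) (x : Euc m) (r : ℝ) : ℝ≥0∞ :=
  ⨅ L ∈ nPlanes m n,
    ((∫⁻ y in closedBall x r,
        ENNReal.ofReal ((Metric.infDist y (L : Set (Euc m)) / r) ^ p) ∂μ)
      / ENNReal.ofReal (r ^ n)) ^ (1 / p)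

/-- The centered beta number `β̂^n_{μ;p}(x,r)`, where the planes must pass through `x`. -/
def betaHat {m : ℕ} (n : ℕ) (p : ℝ) (μ : Measure (Euc m)) (x : Euc m) (r : ℝ) : ℝ≥0∞ :=
  ⨅ L ∈ {L ∈ nPlanes m n | x ∈ L},
    ((∫⁻ y in closedBall x r,
        ENNReal.ofReal ((Metric.infDist y (L : Set (Euc m)) / r) ^ p) ∂μ)
      / ENNReal.ofReal (r ^ n)) ^ (1 / p)

/-- A measure is countably `n`-rectifiable. -/
def CountablyRectifiable {m : ℕ} (n : ℕ) (μ : Measure (Euc m)) : Prop :=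
  μ ≪ μH[(n : ℝ)] ∧
  ∃ f : ℕ → (EuclideanSpace ℝ (Fin n) → Euc m),
    (∀ i, ∃ L : ℝ≥0, LipschitzWith L (f i)) ∧
    μ (Set.univ \ ⋃ i, Set.range (f i)) = 0

/-- A measure is `n`-purely unrectifiable. -/
def PurelyUnrectifiable {m : ℕ} (n : ℕ) (μ : Measure (Euc m)) : Prop :=
  ∀ f : EuclideanSpace ℝ (Fin n) → Euc m, (∃ L : ℝ≥0, LipschitzWith L f) →
    μ (Set.range f) = 0

/-- `μ` is `n`-Ahlfors upper-regular with constant `C`. -/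
def IsUpperRegular {m : ℕ} (n : ℕ) (μ : Measure (Euc m)) (C : ℝ) : Prop :=
  ∀ x ∈ msupport μ, ∀ r > (0:ℝ), μ (closedBall x r) ≤ ENNReal.ofReal (C * r ^ n)

/-- `μ` is `n`-Ahlfors lower-regular with constant `c`. -/
def IsLowerRegular {m : ℕ} (n : ℕ) (μ : Measure (Euc m)) (c : ℝ) : Prop :=
  ∀ x ∈ msupport μ, ∀ r > (0:ℝ), ENNReal.ofReal r < EMetric.diam (msupport μ) →
    ENNReal.ofReal (c * r ^ n) ≤ μ (closedBall x r)

/-- `μ` is `n`-Ahlfors regular. -/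
def AhlforsRegular {m : ℕ} (n : ℕ) (μ : Measure (Euc m)) : Prop :=
  ∃ c C : ℝ, 0 < c ∧ IsUpperRegular n μ C ∧ IsLowerRegular n μ c

/-- `μ` is uniformly `n`-rectifiable. -/
def UniformlyRectifiable {m : ℕ} (n : ℕ) (μ : Measure (Euc m)) : Prop :=
  AhlforsRegular n μ ∧
  ∃ Λ : ℝ≥0, ∃ θ : ℝ, 0 < θ ∧ θ < 1 ∧
    ∀ x ∈ msupport μ, ∀ r > (0:ℝ),
      ∃ f : EuclideanSpace ℝ (Fin n) → Euc m,
        LipschitzOnWith Λ f (closedBall 0 r) ∧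
        μ (closedBall x r \ f '' (closedBall 0 r)) ≤ ENNReal.ofReal θ * μ (closedBall x r)

/-!
All of `μ` lives on the line `{x₂ = 0}`, which is convex and `H²`-null; so every triangle
spanned by three points of the support of `μ` is degenerate, `K₁` vanishes `μ³`-almost
everywhere and the curvature is zero. On the other hand, pulled back to `ℝ`, the mass of
`B(0, δ)` is `∫_{-δ}^{δ} |t|⁻¹ dt = ∞`.
-/

theorem K1_eq_zero_of_range_subset {m n : ℕ} {S : Set (Euc m)} (hS : Convex ℝ S)
    (hS_null : μH[(n+1 : ℝ)] S = 0) {X : Fin (n+2) → Euc m} (hX : Set.range X ⊆ S) :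
    K1 n X = 0 := by
  have hull_null : μH[(n+1 : ℝ)] (convexHull ℝ (Set.range X)) = 0 :=
    measure_mono_null (convexHull_min hX hS) hS_null
  simp [K1, hull_null]

theorem mengerCurv_K1_eq_zero_of_ae_mem {m n : ℕ} {p : ℝ} (hp : p ≠ 0) {S : Set (Euc m)}
    (hS : Convex ℝ S) (hS_null : μH[(n+1 : ℝ)] S = 0) (μ : Measure (Euc m)) [SigmaFinite μ]
    (hμ : ∀ᵐ x ∂μ, x ∈ S) : mengerCurv n p (K1 n) μ = 0 := by
  have range_subset : ∀ᵐ X ∂(Measure.pi fun _ : Fin (n+2) => μ), Set.range X ⊆ S :=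
    (eventually_all.2 fun _ => Measure.tendsto_eval_ae_ae.eventually hμ).mono
      fun _ => Set.range_subset_iff.2
  refine (lintegral_congr_ae (range_subset.mono fun X hX => ?_)).trans lintegral_zero
  simp [K1_eq_zero_of_range_subset hS hS_null hX, Real.zero_rpow hp]

def lineEmbedding (t : ℝ) : Euc 2 := t • EuclideanSpace.single 0 1

theorem lineEmbedding_apply_zero (t : ℝ) : lineEmbedding t 0 = t := by
  simp [lineEmbedding]

theorem isometry_lineEmbedding : Isometry lineEmbedding := by
  refine Isometry.of_dist_eq fun s t => ?_
  simp [lineEmbedding, dist_eq_norm, ← sub_smul, norm_smul]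

theorem range_lineEmbedding : Set.range lineEmbedding = {x : Euc 2 | x 1 = 0} := by
  ext x
  constructor
  · rintro ⟨t, rfl⟩
    simp [lineEmbedding]
  · intro hx
    refine ⟨x 0, ?_⟩
    ext j
    fin_cases j
    · exact lineEmbedding_apply_zero _
    · simpa [lineEmbedding] using hx.symm

theorem hausdorffMeasure_one_restrict_line :
    (μH[(1:ℝ)] : Measure (Euc 2)).restrict {x : Euc 2 | x 1 = 0} = volume.map lineEmbedding := by
  rw [← range_lineEmbedding, ← isometry_lineEmbedding.map_hausdorffMeasure (Or.inl zero_le_one),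
    hausdorffMeasure_real]

theorem hausdorffMeasure_two_line : μH[(2:ℝ)] {x : Euc 2 | x 1 = 0} = 0 := by
  have dimH_lt : dimH {x : Euc 2 | x 1 = 0} < ((2:ℝ≥0) : ℝ≥0∞) :=
    calc dimH {x : Euc 2 | x 1 = 0} = dimH (lineEmbedding '' Set.univ) := by
          rw [Set.image_univ, range_lineEmbedding]
      _ ≤ dimH (Set.univ : Set ℝ) := isometry_lineEmbedding.lipschitz.dimH_image_le _
      _ = 1 := Real.dimH_univ
      _ < _ := by norm_num
  simpa using hausdorffMeasure_of_dimH_lt dimH_lt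

theorem convex_setOf_apply_eq {m : ℕ} (i : Fin m) (c : ℝ) : Convex ℝ {x : Euc m | x i = c} :=
  convex_hyperplane (EuclideanSpace.proj i).isLinear c

theorem preimage_lineEmbedding_closedBall (δ : ℝ) :
    lineEmbedding ⁻¹' closedBall 0 δ = closedBall 0 δ := by
  ext t
  simp [← isometry_lineEmbedding.dist_eq, lineEmbedding]

theorem setLIntegral_ofReal_inv_abs_closedBall_eq_top {δ : ℝ} (hδ : 0 < δ) :
    ∫⁻ t in closedBall (0:ℝ) δ, ENNReal.ofReal |t|⁻¹ = ⊤ := by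
  by_contra h
  have integrableOn_ball : IntegrableOn (fun t : ℝ => t⁻¹) (closedBall 0 δ) := by
    refine ⟨measurable_inv.aestronglyMeasurable, ?_⟩
    simpa [HasFiniteIntegral, Real.enorm_eq_ofReal_abs, lt_top_iff_ne_top] using h
  have : IntervalIntegrable (fun t : ℝ => t⁻¹) volume 0 δ := by
    rw [intervalIntegrable_iff_integrableOn_Icc_of_le hδ.le]
    refine integrableOn_ball.mono_set ?_
    rw [Real.closedBall_eq_Icc, zero_sub, zero_add]
    exact Set.Icc_subset_Icc (by linarith) le_rfl
  simp [hδ.ne] at this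

/-- Remark after Theorem `meurerRect`: the measure with density `1/|x₁|`
with respect to `H¹` restricted to the line `{x₂ = 0}` in `ℝ²` has vanishing integral Menger
curvature for `K₁` although it is not locally finite at the origin. -/
theorem stmt16 :
    mengerCurv 1 2 (K1 1)
        (((μH[(1:ℝ)] : Measure (Euc 2)).restrict {x : Euc 2 | x 1 = 0}).withDensity
          fun x => ENNReal.ofReal |x 0|⁻¹) = 0 ∧
    ∀ δ > (0:ℝ),
      (((μH[(1:ℝ)] : Measure (Euc 2)).restrict {x : Euc 2 | x 1 = 0}).withDensity
          fun x => ENNReal.ofReal |x 0|⁻¹) (closedBall 0 δ) = ⊤ := by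
  have : SigmaFinite ((μH[(1:ℝ)] : Measure (Euc 2)).restrict {x : Euc 2 | x 1 = 0}) :=
    hausdorffMeasure_one_restrict_line ▸
      isometry_lineEmbedding.isClosedEmbedding.measurableEmbedding.sigmaFinite_map
  have : SigmaFinite (((μH[(1:ℝ)] : Measure (Euc 2)).restrict {x : Euc 2 | x 1 = 0}).withDensity
      fun x => ENNReal.ofReal |x 0|⁻¹) :=
    SigmaFinite.withDensity_of_ne_top' fun _ => ofReal_ne_top
  constructor
  · refine mengerCurv_K1_eq_zero_of_ae_mem two_ne_zero (convex_setOf_apply_eq 1 0)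
      (by norm_num [hausdorffMeasure_two_line]) _ ?_
    exact (withDensity_absolutelyContinuous _ _).ae_le (ae_restrict_mem (by measurability))
  · intro δ hδ
    rw [withDensity_apply _ measurableSet_closedBall, hausdorffMeasure_one_restrict_line,
      setLIntegral_map measurableSet_closedBall (by fun_prop)
        isometry_lineEmbedding.continuous.measurable,
      preimage_lineEmbedding_closedBall]
    simpa only [lineEmbedding_apply_zero] using setLIntegral_ofReal_inv_abs_closedBall_eq_top hδ
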